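/- Let n ≥ 1 and consider the rack (ℤ^n, ◁). Every maximal connected subrack of (ℤ^n, ◁) is a cyclic rack: if S is a connected subrack of (ℤ^n, ◁) containing some point x and containing every connected subrack that contains x, then there exist a natural number k and a bijection f : S → ℤ/kℤ (where ℤ/0ℤ = ℤ) such that f(a ◁ b) = f(a) + 1 for all a, b ∈ S. -/

import Mathlib

/-- The rack operation `◁` on `ℤ^n`:
`(x ◁ y)_i = (((x_i ∗ y_1) ∗ y_2) ⋯) ∗ y_n`, where `a ∗ b = 2b − a`. -/
def tri (n : ℕ) (x y : Fin n → ℤ) : Fin n → ℤ :=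
  fun i => (List.ofFn y).foldl (fun a b => 2 * b - a) (x i)

/-- `S` is a subrack: closed under the operation `op` and its inverse `inv`. -/
def IsSubrack {α : Type*} (op inv : α → α → α) (S : Set α) : Prop :=
  ∀ x ∈ S, ∀ y ∈ S, op x y ∈ S ∧ inv x y ∈ S

/-- `S` is connected: any `v ∈ S` is obtained from any `u ∈ S` by finitely many
right translations `z ↦ op z s`, `z ↦ inv z s` with `s ∈ S`. -/
def IsConnectedSubrack {α : Type*} (op inv : α → α → α) (S : Set α) : Prop :=
  ∀ u ∈ S, ∀ v ∈ S,
    Relation.ReflTransGen (fun a b => ∃ s ∈ S, b = op a s ∨ b = inv a s) u v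

/-- `M` is the maximal connected subrack containing `x`: a connected subrack
containing `x` that contains every connected subrack containing `x`. -/
def IsMaxConnSubrack {α : Type*} (op inv : α → α → α) (x : α) (M : Set α) : Prop :=
  IsSubrack op inv M ∧ IsConnectedSubrack op inv M ∧ x ∈ M ∧
    ∀ S : Set α, IsSubrack op inv S → IsConnectedSubrack op inv S → x ∈ S → S ⊆ M

/-!
Write `x ◁ y = (-1)ⁿ x + c(y)·𝟙`. The shift satisfies `c(a ◁ b) = ε c(a) + (1 - ε) c(b)` with
`ε = (-1)ⁿ`, and `1 - ε` is even, so along a path in a connected subrack `S` through `x` every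
step doubles the power of `2` dividing `c - c(x)` on `S`; hence `c` is constant on `S`. Then all
right translations by elements of `S` are one permutation `σ`, and `S` is the `σ`-orbit of `x`,
which is a cyclic rack.
-/

open MulAction Subgroup

theorem mem_orbit_zpowers_iff {α : Type*} {σ : Equiv.Perm α} {x a : α} :
    a ∈ orbit (zpowers σ) x ↔ ∃ m : ℤ, (σ ^ m) x = a := by
  simp only [mem_orbit_iff, exists_zpowers]
  rfl

theorem exists_bijOn_zmod_orbit_zpowers {α : Type*} (σ : Equiv.Perm α) (x : α) :
    ∃ (k : ℕ) (f : α → ZMod k), Set.BijOn f (orbit (zpowers σ) x) Set.univ ∧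
      ∀ a ∈ orbit (zpowers σ) x, f (σ a) = f a + 1 := by
  classical
  set e := orbitZPowersEquiv σ x
  have hσ : ∀ a ∈ orbit (zpowers σ) x, σ a ∈ orbit (zpowers σ) x := fun _ =>
    mem_orbit_of_mem_orbit (⟨σ, mem_zpowers σ⟩ : zpowers σ)
  refine ⟨_, fun a => if h : a ∈ orbit (zpowers σ) x then e ⟨a, h⟩ else 0,
    ⟨fun _ _ => trivial, fun a ha b hb hab => ?_, fun j _ => ?_⟩, fun a ha => ?_⟩
  · simpa [ha, hb] using hab
  · exact ⟨e.symm j, (e.symm j).2, by simp⟩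
  · obtain ⟨m, hm⟩ := e.symm.surjective ⟨a, ha⟩
    obtain ⟨m, rfl⟩ := ZMod.intCast_surjective m
    simp only [ha, hσ a ha, dite_true, ← hm, e.apply_symm_apply, ← e.eq_symm_apply]
    rw [orbitZPowersEquiv_symm_apply'] at hm
    rw [← Int.cast_one, ← Int.cast_add, orbitZPowersEquiv_symm_apply', add_comm, zpow_add,
      zpow_one, mul_smul, hm]
    rfl

section Rack

variable {α : Type*} {op inv : α → α → α} {S : Set α} {x : α}

theorem IsConnectedSubrack.weight_eq_of_affine (hS : IsConnectedSubrack op inv S) (hx : x ∈ S)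
    (w : α → ℤ) {ε : ℤ} (hε : 2 ∣ 1 - ε)
    (hop : ∀ a b, w (op a b) = ε * w a + (1 - ε) * w b)
    (hinv : ∀ a b, w (inv a b) = ε * w a + (1 - ε) * w b) :
    ∀ s ∈ S, w s = w x := by
  have hdvd : ∀ m : ℕ, ∀ s ∈ S, (2 : ℤ) ^ m ∣ w s - w x := by
    intro m
    induction m with
    | zero => simp
    | succ m ih =>
      intro v hv
      have hxv := hS x hx v hv
      clear hv
      induction hxv with
      | refl => simp
      | @tail a b _ hab iha =>
        obtain ⟨s, hs, hb⟩ := hab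
        have hwb : w b - w x = ε * (w a - w x) + (1 - ε) * (w s - w x) := by
          rcases hb with rfl | rfl
          · rw [hop]; ring
          · rw [hinv]; ring
        rw [hwb]
        exact dvd_add (dvd_mul_of_dvd_right iha _)
          (pow_succ' (2 : ℤ) m ▸ mul_dvd_mul hε (ih s hs))
  intro s hs
  refine sub_eq_zero.1 (Int.eq_zero_of_dvd_of_natAbs_lt_natAbs (hdvd (w s - w x).natAbs s hs) ?_)
  simpa using Nat.lt_two_pow_self

theorem IsConnectedSubrack.eq_orbit_zpowers (hS : IsConnectedSubrack op inv S)
    (hsub : IsSubrack op inv S) (hx : x ∈ S) (σ : Equiv.Perm α)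
    (hσ : ∀ a, ∀ s ∈ S, op a s = σ a ∧ inv a s = σ⁻¹ a) :
    S = orbit (zpowers σ) x := by
  refine Set.Subset.antisymm (fun v hv => ?_) (fun v hv => ?_)
  · have hxv := hS x hx v hv
    clear hv
    induction hxv with
    | refl => exact mem_orbit_self x
    | tail _ hab iha =>
      obtain ⟨s, hs, rfl | rfl⟩ := hab
      · rw [(hσ _ s hs).1]
        exact mem_orbit_of_mem_orbit (⟨σ, mem_zpowers σ⟩ : zpowers σ) iha
      · rw [(hσ _ s hs).2]
        exact mem_orbit_of_mem_orbit (⟨σ⁻¹, inv_mem (mem_zpowers σ)⟩ : zpowers σ) iha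
  · obtain ⟨m, rfl⟩ := mem_orbit_zpowers_iff.1 hv
    clear hv
    induction m using Int.induction_on with
    | zero => exact hx
    | succ m ih =>
      rw [add_comm, zpow_one_add, Equiv.Perm.mul_apply, ← (hσ _ x hx).1]
      exact (hsub _ ih x hx).1
    | pred m ih =>
      rw [sub_eq_neg_add, zpow_add, zpow_neg_one, Equiv.Perm.mul_apply, ← (hσ _ x hx).2]
      exact (hsub _ ih x hx).2

end Rack

theorem List.foldl_dihedral (L : List ℤ) (a : ℤ) :
    L.foldl (fun u b => 2 * b - u) a
      = (-1) ^ L.length * a + L.foldl (fun u b => 2 * b - u) 0 := by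
  induction L generalizing a with
  | nil => simp
  | cons b L ih =>
    rw [List.foldl_cons, List.foldl_cons, ih, ih (2 * b - 0), List.length_cons]
    ring

theorem List.foldl_dihedral_map_affine (L : List ℤ) (a t : ℤ) :
    (L.map (fun z => a * z + t)).foldl (fun u b => 2 * b - u) 0
      = a * L.foldl (fun u b => 2 * b - u) 0 + (1 - (-1) ^ L.length) * t := by
  induction L with
  | nil => simp
  | cons b L ih =>
    rw [List.map_cons, List.foldl_cons, List.foldl_cons, List.foldl_dihedral _ (2 * _ - 0),
      List.foldl_dihedral L, ih, List.length_map, List.length_cons]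
    ring

def triShift (n : ℕ) (y : Fin n → ℤ) : ℤ := (List.ofFn y).foldl (fun u b => 2 * b - u) 0

theorem tri_apply (n : ℕ) (x y : Fin n → ℤ) (i : Fin n) :
    tri n x y i = (-1) ^ n * x i + triShift n y := by
  simpa [tri, triShift] using List.foldl_dihedral (List.ofFn y) (x i)

theorem tri_congr_right {n : ℕ} (x : Fin n → ℤ) {y y' : Fin n → ℤ}
    (h : triShift n y = triShift n y') : tri n x y = tri n x y' := by
  ext i
  rw [tri_apply, tri_apply, h]

theorem triShift_affine (n : ℕ) (a t : ℤ) (y : Fin n → ℤ) :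
    triShift n (fun i => a * y i + t) = a * triShift n y + (1 - (-1) ^ n) * t := by
  have h : List.ofFn (fun i => a * y i + t) = (List.ofFn y).map (fun z => a * z + t) := by
    rw [List.map_ofFn]; rfl
  simpa [triShift, h] using List.foldl_dihedral_map_affine (List.ofFn y) a t

theorem triShift_tri (n : ℕ) (x y : Fin n → ℤ) :
    triShift n (tri n x y) = (-1) ^ n * triShift n x + (1 - (-1) ^ n) * triShift n y := by
  simp only [funext (tri_apply n x y), triShift_affine]

theorem triShift_of_tri_eq {n : ℕ} {x y z : Fin n → ℤ} (h : tri n z y = x) :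
    triShift n z = (-1) ^ n * triShift n x + (1 - (-1) ^ n) * triShift n y := by
  have hε : ((-1 : ℤ) ^ n) ^ 2 = 1 := by rw [← pow_mul, mul_comm, pow_mul, neg_one_sq, one_pow]
  rw [← h, triShift_tri]
  linear_combination (triShift n y - triShift n z) * hε

theorem stmt_19_general (n : ℕ)
    (inv : (Fin n → ℤ) → (Fin n → ℤ) → (Fin n → ℤ))
    (hinv₁ : ∀ x y, inv (tri n x y) y = x) (hinv₂ : ∀ x y, tri n (inv x y) y = x)
    (x : Fin n → ℤ) (S : Set (Fin n → ℤ))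
    (hS : IsMaxConnSubrack (tri n) inv x S) :
    ∃ (k : ℕ) (f : (Fin n → ℤ) → ZMod k),
      Set.BijOn f S Set.univ ∧ ∀ a ∈ S, ∀ b ∈ S, f (tri n a b) = f a + 1 := by
  obtain ⟨hsub, hconn, hx, -⟩ := hS
  have hε : (2 : ℤ) ∣ 1 - (-1) ^ n := by
    rcases neg_one_pow_eq_or ℤ n with h | h <;> simp [h]
  have hshift : ∀ s ∈ S, triShift n s = triShift n x :=
    hconn.weight_eq_of_affine hx (triShift n) hε (triShift_tri n) fun a b =>
      triShift_of_tri_eq (hinv₂ a b)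
  let σ : Equiv.Perm (Fin n → ℤ) :=
    ⟨(tri n · x), (inv · x), fun a => hinv₁ a x, fun a => hinv₂ a x⟩
  have hσ : ∀ a, ∀ s ∈ S, tri n a s = σ a ∧ inv a s = σ⁻¹ a := fun a s hs =>
    ⟨tri_congr_right a (hshift s hs),
      calc inv a s = inv (tri n (inv a x) s) s := by rw [tri_congr_right _ (hshift s hs), hinv₂]
        _ = inv a x := hinv₁ _ _⟩
  obtain ⟨k, f, hbij, hf⟩ := exists_bijOn_zmod_orbit_zpowers σ x
  rw [← hconn.eq_orbit_zpowers hsub hx σ hσ] at hbij hf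
  exact ⟨k, f, hbij, fun a ha b hb => (hσ a b hb).1 ▸ hf a ha⟩

theorem stmt_19 (n : ℕ) (hn : 1 ≤ n)
    (inv : (Fin n → ℤ) → (Fin n → ℤ) → (Fin n → ℤ))
    (hinv₁ : ∀ x y, inv (tri n x y) y = x) (hinv₂ : ∀ x y, tri n (inv x y) y = x)
    (x : Fin n → ℤ) (S : Set (Fin n → ℤ))
    (hS : IsMaxConnSubrack (tri n) inv x S) :
    ∃ (k : ℕ) (f : (Fin n → ℤ) → ZMod k),
      Set.BijOn f S Set.univ ∧ ∀ a ∈ S, ∀ b ∈ S, f (tri n a b) = f a + 1 :=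
  stmt_19_general n inv hinv₁ hinv₂ x S hS
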